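/- Let 𝒳 be a set and ϱ : 𝒳 × 𝒳 → ℝ≥0 a symmetric kernel with ϱ(x,x) = 0, satisfying ϱ(x₀,x₂) ≤ K·max(ϱ(x₀,x₁), ϱ(x₁,x₂)) for all x₀,x₁,x₂ with K ≤ 2. Define the chain kernel ϱ̌(x,x') = inf over finite chains x = x₀, x₁, …, x_n = x' of Σᵢ ϱ(x_{i-1}, x_i). Then ϱ̌ ≤ ϱ ≤ 4·ϱ̌. -/
import Mathlib

section FrinkAux

variable {X : Type*} (ρ : X → X → ℝ)

private noncomputable def frinkP (c : ℕ → X) (i : ℕ) : ℝ :=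
  ∑ j ∈ Finset.range i, ρ (c j) (c (j + 1))

private noncomputable def frinkMu (c : ℕ → X) (i : ℕ) : ℝ :=
  (frinkP ρ c i + frinkP ρ c (i + 1)) / 2

private lemma frinkP_succ (c : ℕ → X) (i : ℕ) :
    frinkP ρ c (i + 1) = frinkP ρ c i + ρ (c i) (c (i + 1)) :=
  Finset.sum_range_succ _ _

private lemma frinkMu_succ_sub (c : ℕ → X) (i : ℕ) :
    frinkMu ρ c (i + 1) - frinkMu ρ c i
      = (ρ (c i) (c (i + 1)) + ρ (c (i + 1)) (c (i + 2))) / 2 := by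
  have h1 := frinkP_succ ρ c i
  have h2 := frinkP_succ ρ c (i + 1)
  simp only [frinkMu]
  rw [h2, h1]
  ring

private lemma frinkMu_mono (hnn : ∀ x y, 0 ≤ ρ x y) (c : ℕ → X) :
    Monotone (frinkMu ρ c) := by
  apply monotone_nat_of_le_succ
  intro i
  have := frinkMu_succ_sub ρ c i
  have h1 := hnn (c i) (c (i + 1))
  have h2 := hnn (c (i + 1)) (c (i + 2))
  linarith

private lemma frink_edge_le (hnn : ∀ x y, 0 ≤ ρ x y) (c : ℕ → X) (i : ℕ) :
    ρ (c i) (c (i + 1)) ≤ 2 * (frinkMu ρ c (i + 1) - frinkMu ρ c i) := by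
  have := frinkMu_succ_sub ρ c i
  have h2 := hnn (c (i + 1)) (c (i + 2))
  linarith

private lemma frink_edge_le' (hnn : ∀ x y, 0 ≤ ρ x y) (c : ℕ → X) (i : ℕ) :
    ρ (c (i + 1)) (c (i + 2)) ≤ 2 * (frinkMu ρ c (i + 1) - frinkMu ρ c i) := by
  have := frinkMu_succ_sub ρ c i
  have h1 := hnn (c i) (c (i + 1))
  linarith

private lemma frink_zero (hrefl : ∀ x, ρ x x = 0)
    (hq2 : ∀ x y z, ρ x z ≤ 2 * max (ρ x y) (ρ y z)) :
    ∀ (m l : ℕ) (c : ℕ → X),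
      (∀ i, l ≤ i → i < l + m → ρ (c i) (c (i + 1)) ≤ 0) →
      ρ (c l) (c (l + m)) ≤ 0 := by
  intro m
  induction m with
  | zero => intro l c _; simp [hrefl]
  | succ m ih =>
    intro l c h
    have h1 : ρ (c l) (c (l + m)) ≤ 0 :=
      ih l c (fun i hi1 hi2 => h i hi1 (by omega))
    have h3 : ρ (c (l + m)) (c (l + m + 1)) ≤ 0 := h (l + m) (by omega) (by omega)
    have h2 := hq2 (c l) (c (l + m)) (c (l + m + 1))
    have h4 : max (ρ (c l) (c (l + m))) (ρ (c (l + m)) (c (l + m + 1))) ≤ 0 :=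
      max_le h1 h3
    have : l + (m + 1) = l + m + 1 := by omega
    rw [this]
    linarith

private lemma frink_main (hnn : ∀ x y, 0 ≤ ρ x y) (hrefl : ∀ x, ρ x x = 0)
    (hq2 : ∀ x y z, ρ x z ≤ 2 * max (ρ x y) (ρ y z)) :
    ∀ (m l r : ℕ) (c : ℕ → X) (s : ℝ), r = l + m → l < r →
      frinkMu ρ c (r - 1) - frinkMu ρ c l ≤ s →
      (r = l + 1 → ρ (c l) (c (l + 1)) ≤ 4 * s) →
      ρ (c l) (c r) ≤ 4 * s := by
  intro m
  induction m using Nat.strong_induction_on with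
  | _ m ih =>
    intro l r c s hm hlr hD hsing
    classical
    have hmono := frinkMu_mono ρ hnn c
    by_cases hr1 : r = l + 1
    · rw [hr1]; exact hsing hr1
    -- now r ≥ l + 2
    have hr2 : l + 2 ≤ r := by omega
    set D : ℝ := frinkMu ρ c (r - 1) - frinkMu ρ c l with hDdef
    have hD0 : 0 ≤ D := by
      have : frinkMu ρ c l ≤ frinkMu ρ c (r - 1) := hmono (by omega)
      simp [hDdef]; linarith
    by_cases hDpos : D ≤ 0
    · -- all edges in the segment vanish
      have hzero : ∀ i, l ≤ i → i < r → ρ (c i) (c (i + 1)) ≤ 0 := by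
        intro i hi1 hi2
        by_cases hi3 : i + 1 ≤ r - 1
        · have he := frink_edge_le ρ hnn c i
          have m1 : frinkMu ρ c (i + 1) ≤ frinkMu ρ c (r - 1) := hmono hi3
          have m2 : frinkMu ρ c l ≤ frinkMu ρ c i := hmono hi1
          linarith
        · -- i = r - 1, use the previous midpoint gap
          have hieq : i = r - 1 := by omega
          obtain ⟨i', hi'⟩ : ∃ i', i = i' + 1 := ⟨i - 1, by omega⟩
          have he := frink_edge_le' ρ hnn c i'
          have m1 : frinkMu ρ c (i' + 1) ≤ frinkMu ρ c (r - 1) := hmono (by omega)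
          have m2 : frinkMu ρ c l ≤ frinkMu ρ c i' := hmono (by omega)
          rw [hi']
          have : i' + 1 + 1 = i' + 2 := by omega
          rw [show i' + 1 + 1 = i' + 2 from rfl] at *
          linarith
      have hz := frink_zero ρ hrefl hq2 (r - l) l c
        (fun i hi1 hi2 => hzero i hi1 (by omega))
      have : l + (r - l) = r := by omega
      rw [this] at hz
      have hs0 : 0 ≤ s := le_trans hD0 hD
      linarith
    · push_neg at hDpos
      -- split at the midpoint of the μ-span
      set M : ℝ := frinkMu ρ c l + D / 2 with hMdef
      have hex : ∃ i, M < frinkMu ρ c i := ⟨r - 1, by simp [hMdef, hDdef]; linarith⟩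
      set j := Nat.find hex with hjdef
      have hQj : M < frinkMu ρ c j := Nat.find_spec hex
      have hjle : j ≤ r - 1 := Nat.find_min' hex (by simp [hMdef, hDdef]; linarith)
      have hlj : l < j := by
        by_contra hc
        push_neg at hc
        have : frinkMu ρ c j ≤ frinkMu ρ c l := hmono hc
        have : M < frinkMu ρ c l := lt_of_lt_of_le hQj this
        simp [hMdef] at this
        linarith
      have hjm : ¬ (M < frinkMu ρ c (j - 1)) := Nat.find_min hex (by omega)
      push_neg at hjm
      obtain ⟨j', hj'⟩ : ∃ j', j = j' + 1 := ⟨j - 1, by omega⟩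
      have hjm' : frinkMu ρ c j' ≤ M := by rw [show j' = j - 1 by omega]; exact hjm
      -- left segment [l, j]
      have hL : ρ (c l) (c j) ≤ 4 * (D / 2) := by
        apply ih (j - l) (by omega) l j c (D / 2) (by omega) hlj
        · have : frinkMu ρ c (j - 1) ≤ M := hjm
          simp [hMdef] at this ⊢
          linarith
        · intro hj1
          -- singleton: bound a_l via neighbour edge l+1 (exists since r ≥ l+2)
          have he := frink_edge_le ρ hnn c l
          have m1 : frinkMu ρ c (l + 1) ≤ frinkMu ρ c (r - 1) := hmono (by omega)
          have : ρ (c l) (c (l + 1)) ≤ 2 * D := by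
            simp [hDdef] at *
            linarith
          linarith
      -- right segment [j, r]
      have hR : ρ (c j) (c r) ≤ 4 * (D / 2) := by
        apply ih (r - j) (by omega) j r c (D / 2) (by omega) (by omega)
        · have m1 : frinkMu ρ c (r - 1) ≤ frinkMu ρ c (r - 1) := le_refl _
          simp [hMdef] at hQj
          linarith
        · intro hrj
          -- singleton: bound a_j via neighbour edge j-1 = j'
          have he := frink_edge_le' ρ hnn c j'
          have m1 : frinkMu ρ c (j' + 1) ≤ frinkMu ρ c (r - 1) := by
            apply hmono; omega
          have m2 : frinkMu ρ c l ≤ frinkMu ρ c j' := hmono (by omega)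
          have : ρ (c (j' + 1)) (c (j' + 2)) ≤ 2 * D := by
            simp [hDdef] at *
            linarith
          rw [hj']
          have : ρ (c (j' + 1)) (c (j' + 1 + 1)) ≤ 2 * D := this
          linarith
      have hcomb := hq2 (c l) (c j) (c r)
      have hmax : max (ρ (c l) (c j)) (ρ (c j) (c r)) ≤ 2 * D :=
        max_le (by linarith) (by linarith)
      have : ρ (c l) (c r) ≤ 4 * D := by linarith
      linarith

private lemma frink_chain (hnn : ∀ x y, 0 ≤ ρ x y) (hrefl : ∀ x, ρ x x = 0)
    (hq2 : ∀ x y z, ρ x z ≤ 2 * max (ρ x y) (ρ y z)) (n : ℕ) (c : ℕ → X) :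
    ρ (c 0) (c n) ≤ 4 * frinkP ρ c n := by
  rcases Nat.eq_zero_or_pos n with hn | hn
  · subst hn
    simp [frinkP, hrefl]
  · apply frink_main ρ hnn hrefl hq2 n 0 n c (frinkP ρ c n) (by omega) hn
    · -- span bound: μ_{n-1} - μ_0 ≤ P n
      have h1 : frinkMu ρ c (n - 1) ≤ frinkP ρ c n := by
        have ha : frinkP ρ c (n - 1) ≤ frinkP ρ c n := by
          apply Finset.sum_le_sum_of_subset_of_nonneg
          · exact Finset.range_subset_range.mpr (by omega)
          · intro i _ _; exact hnn _ _
        have hb : frinkP ρ c (n - 1 + 1) ≤ frinkP ρ c n := by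
          apply Finset.sum_le_sum_of_subset_of_nonneg
          · exact Finset.range_subset_range.mpr (by omega)
          · intro i _ _; exact hnn _ _
        simp [frinkMu]
        linarith
      have h2 : 0 ≤ frinkMu ρ c 0 := by
        have := hnn (c 0) (c 1)
        simp [frinkMu, frinkP, Finset.sum_range_one]
        linarith
      linarith
    · intro hn1
      have hn1' : n = 1 := by omega
      subst hn1'
      simp [frinkP, Finset.sum_range_one]
      have := hnn (c 0) (c 1)
      linarith

end FrinkAux

/-- Frink's metrization lemma: for a symmetric kernel `ρ` vanishing on the diagonal and
satisfying the quasi-ultrametric inequality with constant `K ≤ 2`, the kernel `ρ̌` obtained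
by the chain construction satisfies `ρ̌ ≤ ρ ≤ 4 ρ̌`. -/
theorem frink_chain_construction
    (X : Type*) (ρ : X → X → ℝ)
    (hnn : ∀ x y, 0 ≤ ρ x y)
    (hsymm : ∀ x y, ρ x y = ρ y x)
    (hrefl : ∀ x, ρ x x = 0)
    (K : ℝ) (hK : K ≤ 2)
    (hquasi : ∀ x₀ x₁ x₂, ρ x₀ x₂ ≤ K * max (ρ x₀ x₁) (ρ x₁ x₂))
    (x x' : X) :
    sInf {s : ℝ | ∃ (n : ℕ) (c : ℕ → X), c 0 = x ∧ c n = x' ∧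
        s = ∑ i ∈ Finset.range n, ρ (c i) (c (i + 1))} ≤ ρ x x' ∧
      ρ x x' ≤ 4 * sInf {s : ℝ | ∃ (n : ℕ) (c : ℕ → X), c 0 = x ∧ c n = x' ∧
        s = ∑ i ∈ Finset.range n, ρ (c i) (c (i + 1))} := by
  have hq2 : ∀ a b d : X, ρ a d ≤ 2 * max (ρ a b) (ρ b d) := by
    intro a b d
    have h1 := hquasi a b d
    have h2 : 0 ≤ max (ρ a b) (ρ b d) := le_trans (hnn a b) (le_max_left _ _)
    nlinarith
  set Φ : Set ℝ := {s : ℝ | ∃ (n : ℕ) (c : ℕ → X), c 0 = x ∧ c n = x' ∧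
      s = ∑ i ∈ Finset.range n, ρ (c i) (c (i + 1))} with hΦ
  have hmem : ρ x x' ∈ Φ := by
    refine ⟨1, fun i => if i = 0 then x else x', by simp, by simp, ?_⟩
    simp [Finset.sum_range_one]
  have hne : Φ.Nonempty := ⟨ρ x x', hmem⟩
  have hbdd : BddBelow Φ := by
    refine ⟨0, fun s hs => ?_⟩
    obtain ⟨n, c, _, _, rfl⟩ := hs
    exact Finset.sum_nonneg fun i _ => hnn _ _
  constructor
  · exact csInf_le hbdd hmem
  · have hlb : ∀ s ∈ Φ, ρ x x' / 4 ≤ s := by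
      intro s hs
      obtain ⟨n, c, h0, h1, rfl⟩ := hs
      have := frink_chain ρ hnn hrefl hq2 n c
      rw [h0, h1] at this
      simp only [frinkP] at this
      linarith
    have := le_csInf hne hlb
    linarith
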